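/- Fix t ∈ [0,1), n with 2^N ≤ n < 2^{N+1}, n = 2^N + n' with n' < 2^N, and m = ∑_{i=0}^{N−1} t_{i+1} 2^i. The Lebesgue constant of the conjugate transform equals L_n^{(t)} = ∑_{i=0}^{N−1} max(α_i(n), 2α_i(m))/2^{i+1} + |2^{N+1} − n − 2m + 2 t_{N+1}(n − 2^N)|/2^{N+1} + |n − 2m − 2 t_{N+1}(n − 2^N)|/2^{N+1}. -/

import Mathlib

open MeasureTheory Finset

noncomputable section

/-- The dyadic group: countable product of ℤ/2. -/
abbrev G := ℕ → ZMod 2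

/-- Binary digits of a real number, as an element of the dyadic group. -/
def toG (x : ℝ) : G := fun n => ((⌊x * 2 ^ (n + 1)⌋ : ℤ) : ZMod 2)

/-- Haar (product) measure on the dyadic group, realized as the pushforward
of Lebesgue measure on `[0,1)` under the binary digit map. -/
def muG : Measure G := (volume.restrict (Set.Ico (0:ℝ) 1)).map toG

/-- Walsh–Paley functions. -/
def walsh (m : ℕ) (x : G) : ℝ :=
  ∏ k ∈ Finset.range m, if m.testBit k then (-1 : ℝ) ^ ((x k).val) else 1

/-- Walsh–Dirichlet kernel. -/
def Dir (n : ℕ) (x : G) : ℝ := ∑ k ∈ Finset.range n, walsh k x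

/-- Dyadic interval `I_n` of rank `n` about `0`. -/
def Iset (n : ℕ) : Set G := {x | ∀ i < n, x i = 0}

/-- `k`-th binary digit of `n`, as a natural number. -/
def bit (n k : ℕ) : ℕ := (n.testBit k).toNat

/-- `α_i(n) = |∑_{k<i} n_k 2^k − n_i 2^i|`. -/
def alpha (n i : ℕ) : ℤ :=
  |(∑ k ∈ Finset.range i, (bit n k : ℤ) * 2 ^ k) - (bit n i : ℤ) * 2 ^ i|

/-- Binary variation `V(n) = n_0 + ∑_{k≥1} |n_k − n_{k−1}|`. -/
def V (n : ℕ) : ℕ :=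
  bit n 0 + ∑ k ∈ Finset.range n, if n.testBit (k+1) ≠ n.testBit k then 1 else 0

/-- `A(n)`: indices where consecutive binary digits differ (with `n_{−1} = 0`). -/
def Aset (n : ℕ) : Finset ℕ :=
  (Finset.range (n+1)).filter
    (fun i => if i = 0 then n.testBit 0 else n.testBit i ≠ n.testBit (i-1))

/-- `S(n) = ∑_{i ∈ A(n)} α_i(n)/2^{i+1}`. -/
def S (n : ℕ) : ℝ := ∑ i ∈ Aset n, (alpha n i : ℝ) / 2 ^ (i+1)

/-- `j`-th binary digit of a real number `t ∈ [0,1)`. -/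
def tdig (t : ℝ) (j : ℕ) : ℕ := (⌊t * 2 ^ (j+1)⌋ % 2).toNat

/-- `m = ∑_{i=0}^{N-1} t_{i+1} 2^i`. -/
def mOf (t : ℝ) (N : ℕ) : ℕ := ∑ i ∈ Finset.range N, tdig t (i+1) * 2 ^ i

/-- Conjugate Walsh–Dirichlet kernel
`D̃_n^{(t)} = D_n − 2 w_m D_m − 2 t_{N+1}(D_n − D_{2^N})` where `m = mOf t N`. -/
def Dconj (t : ℝ) (N n : ℕ) (x : G) : ℝ :=
  Dir n x - 2 * walsh (mOf t N) x * Dir (mOf t N) x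
    - 2 * (tdig t (N+1) : ℝ) * (Dir n x - Dir (2^N) x)

/-- Lebesgue constant of the conjugate transform. -/
def Leb (t : ℝ) (N n : ℕ) : ℝ := ∫ x, |Dconj t N n x| ∂muG

/-- `T(a,b) = {i : 1 ≤ i ≤ N−1, a_i ≠ a_{i−1}, b_i = b_{i−1}}`. -/
def Tset (N a b : ℕ) : Finset ℕ :=
  (Finset.Icc 1 (N-1)).filter
    (fun i => a.testBit i ≠ a.testBit (i-1) ∧ b.testBit i = b.testBit (i-1))

/-!
Write `n = 2^N + n'`. Since `D_{2^N + n'} = D_{2^N} + r_N D_{n'}` with `r_N(x) = (-1)^{x_N}`,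
`D̃_n^{(t)} = A + r_N B`, where `A = D_{2^N} - 2 w_m D_m` and `B = (1 - 2 t_{N+1}) D_{n'}`
depend only on `x_0, …, x_{N-1}`. Averaging over `x_N` turns `|A + r_N B|` into
`(|A + B| + |A - B|) / 2 = max (|A|, |B|)`. On the shell `I_i \ I_{i+1}` (`i < N`), of measure
`2^{-(i+1)}`, one has `D_{2^N} = 0` and `D_k = w_k (k mod 2^i - k_i 2^i)`, so `|A| = 2 α_i(m)` and
`|B| = α_i(n') = α_i(n)`; on `I_N` every `D_k` equals `k`, which gives the two boundary terms.
All functions involved depend on finitely many coordinates, so their integrals against `muG` are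
averages over the dyadic points `toG (j / 2^K)`.
-/

lemma max_abs_abs_eq {α : Type*} [Field α] [LinearOrder α] [IsStrictOrderedRing α] (a b : α) :
    max |a| |b| = (|a + b| + |a - b|) / 2 := by
  rcases le_total |a| |b| with h | h <;> [rw [max_eq_right h]; rw [max_eq_left h]] <;>
    cases abs_cases a <;> cases abs_cases b <;> cases abs_cases (a + b) <;>
    cases abs_cases (a - b) <;> linarith

lemma sum_range_two_mul {M : Type*} [AddCommMonoid M] (n : ℕ) (f : ℕ → M) :
    ∑ j ∈ range (2 * n), f j = ∑ u ∈ range n, (f (2 * u) + f (2 * u + 1)) := by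
  induction n with
  | zero => simp
  | succ n ih => rw [Nat.mul_succ, sum_range_succ, sum_range_succ, sum_range_succ, ih, add_assoc]

lemma sum_Ico_one_two_pow {M : Type*} [AddCommMonoid M] (N : ℕ) (f : ℕ → M) :
    ∑ u ∈ Ico 1 (2 ^ N), f u = ∑ p ∈ range N, ∑ u ∈ Ico (2 ^ p) (2 ^ (p + 1)), f u := by
  induction N with
  | zero => simp
  | succ N ih =>
    rw [sum_range_succ, ← ih, sum_Ico_consecutive f Nat.one_le_two_pow
      (Nat.pow_le_pow_right two_pos N.le_succ)]

theorem DependsOn.measurable_of_finite {ι β : Type*} {α : ι → Type*}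
    [∀ i, MeasurableSpace (α i)] [∀ i, Countable (α i)] [∀ i, MeasurableSingletonClass (α i)]
    [MeasurableSpace β] [Nonempty β] {s : Set ι} [Finite s] {f : (Π i, α i) → β}
    (hf : DependsOn f s) : Measurable f := by
  obtain ⟨g, rfl⟩ := dependsOn_iff_exists_comp.1 hf
  exact (measurable_of_countable g).comp (Set.measurable_restrict s)

section IntervalIntegral

variable {E : Type*} [NormedAddCommGroup E] {f : ℝ → E} {a b : ℝ} {c : E}

lemma intervalIntegral_eq_of_eqOn_Ico [NormedSpace ℝ E] [CompleteSpace E] (hab : a ≤ b)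
    (hf : Set.EqOn f (fun _ ↦ c) (Set.Ico a b)) : ∫ x in a..b, f x = (b - a) • c := by
  rw [intervalIntegral.integral_of_le hab, ← integral_Ico_eq_integral_Ioc,
    setIntegral_congr_fun measurableSet_Ico hf, setIntegral_const, measureReal_def,
    Real.volume_Ico, ENNReal.toReal_ofReal (sub_nonneg.2 hab)]

lemma intervalIntegrable_of_eqOn_Ico (hab : a ≤ b) (hf : Set.EqOn f (fun _ ↦ c) (Set.Ico a b)) :
    IntervalIntegrable f volume a b := by
  rw [intervalIntegrable_iff_integrableOn_Ioc_of_le hab]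
  exact ((integrableOn_const measure_Ico_lt_top.ne).congr_fun hf.symm
    measurableSet_Ico).congr_set_ae Ico_ae_eq_Ioc.symm

end IntervalIntegral

lemma measurable_toG : Measurable toG :=
  measurable_pi_lambda _ fun _ ↦ (measurable_of_countable _).comp (measurable_id.mul_const _).floor

lemma toG_zero : toG 0 = 0 := by
  ext n
  simp [toG]

lemma toG_apply_of_nonneg {x : ℝ} (hx : 0 ≤ x) {K l : ℕ} (hl : l < K) :
    toG x l = ((⌊x * 2 ^ K⌋₊ / 2 ^ (K - 1 - l) : ℕ) : ZMod 2) := by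
  have hpow : x * 2 ^ (l + 1) = x * 2 ^ K / ((2 ^ (K - 1 - l) : ℕ) : ℝ) := by
    rw [eq_div_iff (by positivity), Nat.cast_pow, Nat.cast_ofNat, mul_assoc, ← pow_add,
      show l + 1 + (K - 1 - l) = K by omega]
  rw [toG, hpow, ← Nat.floor_div_natCast, ← Int.natCast_floor_eq_floor (by positivity),
    Int.cast_natCast]

lemma toG_natCast_div_two_pow_apply (j : ℕ) {K l : ℕ} (hl : l < K) :
    toG ((j : ℝ) / 2 ^ K) l = ((j / 2 ^ (K - 1 - l) : ℕ) : ZMod 2) := by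
  rw [toG_apply_of_nonneg (by positivity) hl, div_mul_cancel₀ _ (by positivity), Nat.floor_natCast]

lemma toG_apply_eq_of_mem_Ico {K j l : ℕ} (hl : l < K) {x : ℝ}
    (hx : x ∈ Set.Ico ((j : ℝ) / 2 ^ K) ((j + 1) / 2 ^ K)) :
    toG x l = toG ((j : ℝ) / 2 ^ K) l := by
  have h2K : (0 : ℝ) < 2 ^ K := by positivity
  have hj : (0 : ℝ) ≤ j / 2 ^ K := by positivity
  have hfloor : ⌊x * 2 ^ K⌋₊ = j := by
    rw [Nat.floor_eq_iff (by nlinarith [hx.1])]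
    rwa [Set.mem_Ico, div_le_iff₀ h2K, lt_div_iff₀ h2K] at hx
  rw [toG_apply_of_nonneg (hj.trans hx.1) hl, hfloor, toG_natCast_div_two_pow_apply j hl]

theorem integral_muG_eq_average {K : ℕ} {F : G → ℝ} (hF : DependsOn F (Set.Iio K)) :
    ∫ x, F x ∂muG = (∑ j ∈ range (2 ^ K), F (toG (j / 2 ^ K))) / 2 ^ K := by
  set a : ℕ → ℝ := fun j ↦ j / 2 ^ K
  have ha : ∀ j, a j ≤ a (j + 1) := fun j ↦ by simp only [a]; gcongr; simp
  have hconst : ∀ j, Set.EqOn (fun x ↦ F (toG x)) (fun _ ↦ F (toG (a j)))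
      (Set.Ico (a j) (a (j + 1))) :=
    fun j x hx ↦ hF fun l hl ↦ toG_apply_eq_of_mem_Ico hl (by simpa [a] using hx)
  have h0 : a 0 = 0 := by simp [a]
  have h1 : a (2 ^ K) = 1 := by simp [a]
  rw [muG, integral_map measurable_toG.aemeasurable
      (hF.measurable_of_finite (s := Set.Iio K)).aestronglyMeasurable,
    integral_Ico_eq_integral_Ioc, ← intervalIntegral.integral_of_le zero_le_one, ← h0, ← h1,
    ← intervalIntegral.sum_integral_adjacent_intervals
      fun j _ ↦ intervalIntegrable_of_eqOn_Ico (ha j) (hconst j), sum_div]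
  refine sum_congr rfl fun j _ ↦ ?_
  rw [intervalIntegral_eq_of_eqOn_Ico (ha j) (hconst j), smul_eq_mul]
  simp only [a]
  field_simp
  push_cast
  ring

lemma natCast_two_mul_div_two_pow_succ (u N : ℕ) :
    ((2 * u : ℕ) : ℝ) / 2 ^ (N + 1) = u / 2 ^ N := by
  push_cast
  field_simp
  ring

theorem integral_abs_add_neg_one_pow_mul {N : ℕ} {A B : G → ℝ}
    (hA : DependsOn A (Set.Iio N)) (hB : DependsOn B (Set.Iio N)) :
    ∫ x, |A x + (-1) ^ (x N).val * B x| ∂muG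
      = (∑ u ∈ range (2 ^ N), max |A (toG (u / 2 ^ N))| |B (toG (u / 2 ^ N))|) / 2 ^ N := by
  have hF : DependsOn (fun x : G ↦ |A x + (-1) ^ (x N).val * B x|) (Set.Iio (N + 1)) := by
    intro x y h
    have hN : ∀ l ∈ Set.Iio N, x l = y l := fun l hl ↦ h l (Nat.lt_succ_of_lt hl)
    simp only [hA hN, hB hN, h N (Nat.lt_succ_self N)]
  -- the dyadic points `2u` and `2u + 1` of rank `N + 1` differ only in the coordinate `N`
  have hpair : ∀ u : ℕ,
      |A (toG ((2 * u : ℕ) / 2 ^ (N + 1))) + (-1) ^ (toG ((2 * u : ℕ) / 2 ^ (N + 1)) N).val *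
          B (toG ((2 * u : ℕ) / 2 ^ (N + 1)))|
        + |A (toG ((2 * u + 1 : ℕ) / 2 ^ (N + 1))) +
          (-1) ^ (toG ((2 * u + 1 : ℕ) / 2 ^ (N + 1)) N).val *
          B (toG ((2 * u + 1 : ℕ) / 2 ^ (N + 1)))|
        = 2 * max |A (toG (u / 2 ^ N))| |B (toG (u / 2 ^ N))| := by
    intro u
    have hlow : ∀ l ∈ Set.Iio N, toG ((2 * u + 1 : ℕ) / 2 ^ (N + 1)) l = toG (u / 2 ^ N) l := by
      intro l hl
      rw [toG_natCast_div_two_pow_apply _ (Nat.lt_succ_of_lt hl),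
        toG_natCast_div_two_pow_apply _ hl, show N + 1 - 1 - l = N - 1 - l + 1 by
          simp only [Set.mem_Iio] at hl; omega, pow_succ', ← Nat.div_div_eq_div_mul,
        show (2 * u + 1) / 2 = u by omega]
    have hdigit : ∀ j, toG ((j : ℕ) / 2 ^ (N + 1)) N = j := by
      intro j
      rw [toG_natCast_div_two_pow_apply _ (Nat.lt_succ_self N),
        show N + 1 - 1 - N = 0 by omega, pow_zero, Nat.div_one]
    have h2 : (2 : ZMod 2) = 0 := rfl
    have h0 : ((2 * u : ℕ) : ZMod 2).val = 0 := by simp [h2]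
    have h1 : ((2 * u + 1 : ℕ) : ZMod 2).val = 1 := by simp [h2]; rfl
    rw [hdigit, hdigit, natCast_two_mul_div_two_pow_succ, hA hlow, hB hlow, h0, h1, pow_zero,
      pow_one, one_mul, neg_one_mul, ← sub_eq_add_neg, max_abs_abs_eq]
    ring
  rw [integral_muG_eq_average hF, show 2 ^ (N + 1) = 2 * 2 ^ N from pow_succ' 2 N,
    sum_range_two_mul, sum_congr rfl fun u _ ↦ hpair u, ← mul_sum, pow_succ']
  field_simp

theorem sum_div_two_pow_eq_of_shells {N : ℕ} (g : G → ℝ) (c : ℕ → ℝ)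
    (hg : ∀ i < N, ∀ x ∈ Iset i, x i = 1 → g x = c i) :
    (∑ u ∈ range (2 ^ N), g (toG (u / 2 ^ N))) / 2 ^ N
      = g 0 / 2 ^ N + ∑ i ∈ range N, c i / 2 ^ (i + 1) := by
  have hblock : ∀ p < N, ∀ u ∈ Ico (2 ^ p) (2 ^ (p + 1)),
      g (toG ((u : ℕ) / 2 ^ N)) = c (N - 1 - p) := by
    -- `toG (u / 2^N)` lies in the shell `I_{N-1-p} \ I_{N-p}`
    intro p hp u hu
    rw [mem_Ico] at hu
    refine hg _ (by omega) _ (fun l hl ↦ ?_) ?_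
    · rw [toG_natCast_div_two_pow_apply u (by omega), Nat.div_eq_of_lt, Nat.cast_zero]
      exact hu.2.trans_le (Nat.pow_le_pow_right two_pos (by omega))
    · rw [toG_natCast_div_two_pow_apply u (by omega), show N - 1 - (N - 1 - p) = p by omega,
        Nat.div_eq_of_lt_le (k := 1) (by simpa using hu.1) (by simpa [pow_succ'] using hu.2),
        Nat.cast_one]
  rw [range_eq_Ico, ← sum_Ico_consecutive _ (Nat.zero_le 1) Nat.one_le_two_pow,
    sum_Ico_one_two_pow, sum_congr rfl fun p hp ↦ sum_congr rfl (hblock p (mem_range.1 hp)),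
    ← sum_range_reflect (fun i ↦ c i / 2 ^ (i + 1)), add_div]
  simp only [Nat.Ico_succ_singleton, sum_singleton, Nat.cast_zero, zero_div, toG_zero]
  rw [sum_div]
  refine congrArg _ (sum_congr rfl fun p hp ↦ ?_)
  have hN : (2 : ℝ) ^ N = 2 ^ p * 2 ^ (N - 1 - p + 1) := by
    rw [← pow_add]
    congr 1
    have := mem_range.1 hp
    omega
  rw [sum_const, Nat.card_Ico, show 2 ^ (p + 1) - 2 ^ p = 2 ^ p by rw [pow_succ]; omega,
    nsmul_eq_mul, hN]
  push_cast
  field_simp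

lemma walsh_eq_prod_range {m B : ℕ} (hm : m < 2 ^ B) (x : G) :
    walsh m x = ∏ k ∈ range B, if m.testBit k then (-1 : ℝ) ^ (x k).val else 1 := by
  have hone : ∀ C, m < 2 ^ C → ∀ k ∈ range (m + B), k ∉ range C →
      (if m.testBit k then (-1 : ℝ) ^ (x k).val else 1) = 1 := fun C hC k _ hk ↦ by
    rw [Nat.testBit_lt_two_pow (hC.trans_le (Nat.pow_le_pow_right two_pos (by simpa using hk))),
      if_neg Bool.false_ne_true]
  rw [walsh, prod_subset (range_subset_range.2 (Nat.le_add_right m B))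
      (hone m m.lt_two_pow_self),
    ← prod_subset (range_subset_range.2 (Nat.le_add_left B m)) (hone B hm)]

lemma walsh_dependsOn {m B : ℕ} (hm : m < 2 ^ B) : DependsOn (walsh m) (Set.Iio B) := by
  intro x y h
  rw [walsh_eq_prod_range hm, walsh_eq_prod_range hm]
  exact prod_congr rfl fun k hk ↦ by rw [h k (mem_range.1 hk)]

lemma Dir_dependsOn {k B : ℕ} (hk : k ≤ 2 ^ B) : DependsOn (Dir k) (Set.Iio B) :=
  fun _ _ h ↦ sum_congr rfl fun _ hs ↦
    walsh_dependsOn ((mem_range.1 hs).trans_le hk) h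

lemma walsh_mul_self (m : ℕ) (x : G) : walsh m x * walsh m x = 1 := by
  rw [walsh, ← prod_mul_distrib]
  refine prod_eq_one fun k _ ↦ ?_
  split_ifs
  · rw [← pow_add, Even.neg_one_pow ⟨_, rfl⟩]
  · rw [mul_one]

lemma abs_walsh (m : ℕ) (x : G) : |walsh m x| = 1 := by
  rcases mul_self_eq_one_iff.1 (walsh_mul_self m x) with h | h <;> simp [h]

lemma walsh_two_pow (j : ℕ) (x : G) : walsh (2 ^ j) x = (-1) ^ (x j).val := by
  rw [walsh_eq_prod_range (Nat.pow_lt_pow_right one_lt_two j.lt_succ_self), prod_range_succ,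
    prod_eq_one fun k hk ↦ by rw [Nat.testBit_two_pow_of_ne (mem_range.1 hk).ne', if_neg (by simp)],
    Nat.testBit_two_pow_self, if_pos rfl, one_mul]

lemma walsh_two_pow_add {j r : ℕ} (hr : r < 2 ^ j) (x : G) :
    walsh (2 ^ j + r) x = walsh (2 ^ j) x * walsh r x := by
  have hj : 2 ^ j < 2 ^ (j + 1) := Nat.pow_lt_pow_right one_lt_two j.lt_succ_self
  rw [walsh_eq_prod_range (B := j + 1) (by rw [pow_succ]; omega), walsh_eq_prod_range hj,
    walsh_eq_prod_range (hr.trans hj), ← prod_mul_distrib]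
  refine prod_congr rfl fun k hk ↦ ?_
  rcases (Nat.lt_succ_iff.1 (mem_range.1 hk)).lt_or_eq with hkj | rfl
  · rw [Nat.testBit_two_pow_add_gt hkj, Nat.testBit_two_pow_of_ne hkj.ne']
    simp
  · rw [Nat.testBit_two_pow_add_eq, Nat.testBit_lt_two_pow hr, Nat.testBit_two_pow_self]
    simp

lemma walsh_eq_one_of_mem_Iset {x : G} {i s : ℕ} (h0 : x ∈ Iset i) (hs : s < 2 ^ i) :
    walsh s x = 1 := by
  rw [walsh_eq_prod_range hs]
  exact prod_eq_one fun k hk ↦ by rw [h0 k (mem_range.1 hk)]; simp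

lemma Dir_two_pow_add {j r : ℕ} (hr : r ≤ 2 ^ j) (x : G) :
    Dir (2 ^ j + r) x = Dir (2 ^ j) x + walsh (2 ^ j) x * Dir r x := by
  rw [Dir, sum_range_add, Dir, Dir, mul_sum]
  exact congrArg _ (sum_congr rfl fun s hs ↦ walsh_two_pow_add ((mem_range.1 hs).trans_le hr) x)

lemma Dir_two_pow (j : ℕ) (x : G) : Dir (2 ^ j) x = ∏ l ∈ range j, (1 + (-1) ^ (x l).val) := by
  induction j with
  | zero => simp [Dir, walsh]
  | succ j ih =>
    rw [pow_succ, mul_two, Dir_two_pow_add le_rfl, walsh_two_pow, prod_range_succ, ← ih]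
    ring

lemma Dir_two_pow_of_mem_Iset {x : G} {j : ℕ} (h : x ∈ Iset j) :
    Dir (2 ^ j) x = 2 ^ j := by
  rw [Dir_two_pow, prod_congr rfl fun l hl ↦ by rw [h l (mem_range.1 hl)]]
  norm_num

lemma Dir_two_pow_of_eq_one {x : G} {i j : ℕ} (hij : i < j) (h : x i = 1) :
    Dir (2 ^ j) x = 0 :=
  (Dir_two_pow j x).trans (prod_eq_zero (mem_range.2 hij) (by rw [h]; norm_num [ZMod.val_one]))

lemma Dir_of_mem_Iset {x : G} {i k : ℕ} (h0 : x ∈ Iset i) (hk : k ≤ 2 ^ i) : Dir k x = k := by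
  rw [Dir, sum_congr rfl fun s hs ↦ walsh_eq_one_of_mem_Iset h0 ((mem_range.1 hs).trans_le hk)]
  simp

theorem Dir_eq_walsh_mul_of_shell {x : G} {i : ℕ} (h0 : x ∈ Iset i) (h1 : x i = 1)
    (k : ℕ) : Dir k x = walsh k x * ((k % 2 ^ i : ℕ) - (bit k i : ℝ) * 2 ^ i) := by
  induction k using Nat.strong_induction_on with
  | _ k ih =>
  rcases lt_or_ge k (2 ^ i) with hk | hk
  · rw [Dir_of_mem_Iset h0 hk.le, walsh_eq_one_of_mem_Iset h0 hk, Nat.mod_eq_of_lt hk, bit,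
      Nat.testBit_lt_two_pow hk]
    simp
  obtain ⟨L, r, rfl, hr⟩ : ∃ L r, k = 2 ^ L + r ∧ r < 2 ^ L := by
    have hk0 : k ≠ 0 := (Nat.two_pow_pos i).trans_le hk |>.ne'
    have hle := Nat.pow_log_le_self 2 hk0
    have hlt := Nat.lt_pow_succ_log_self one_lt_two k
    exact ⟨Nat.log 2 k, k - 2 ^ Nat.log 2 k, by omega, by rw [pow_succ] at hlt; omega⟩
  have hiL : i ≤ L := Nat.lt_succ_iff.1 <| (Nat.pow_lt_pow_iff_right one_lt_two).1 <|
    hk.trans_lt (by rw [pow_succ]; omega)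
  rw [Dir_two_pow_add hr.le, walsh_two_pow_add hr]
  rcases hiL.eq_or_lt with rfl | hiL
  · rw [Dir_two_pow_of_mem_Iset h0, Dir_of_mem_Iset h0 hr.le, walsh_eq_one_of_mem_Iset h0 hr,
      walsh_two_pow, h1, Nat.add_mod_left, Nat.mod_eq_of_lt hr, bit, Nat.testBit_two_pow_add_eq,
      Nat.testBit_lt_two_pow hr]
    norm_num [ZMod.val_one]
    ring
  · have hmod : (2 ^ L + r) % 2 ^ i = r % 2 ^ i := by
      rw [← Nat.sub_add_cancel hiL.le, pow_add, Nat.mul_add_mod_self_right]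
    rw [Dir_two_pow_of_eq_one hiL h1, ih r (by omega), hmod, bit, bit,
      Nat.testBit_two_pow_add_gt hiL]
    ring

lemma walsh_apply_zero (m : ℕ) : walsh m 0 = 1 :=
  walsh_eq_one_of_mem_Iset (fun _ _ ↦ rfl) m.lt_two_pow_self

lemma Dir_apply_zero (k : ℕ) : Dir k 0 = k :=
  Dir_of_mem_Iset (fun _ _ ↦ rfl) k.lt_two_pow_self.le

lemma sum_range_bit_mul_two_pow (k i : ℕ) : ∑ j ∈ range i, bit k j * 2 ^ j = k % 2 ^ i := by
  induction i with
  | zero => simp [Nat.mod_one]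
  | succ i ih =>
    rw [sum_range_succ, ih, Nat.mod_pow_succ, bit, Nat.testBit_eq_decide_div_mod_eq]
    rcases Nat.mod_two_eq_zero_or_one (k / 2 ^ i) with h | h <;> simp [h]

lemma alpha_eq_abs (k i : ℕ) : (alpha k i : ℝ) = |((k % 2 ^ i : ℕ) : ℝ) - bit k i * 2 ^ i| := by
  rw [alpha, ← sum_range_bit_mul_two_pow]
  push_cast
  rfl

lemma alpha_two_pow_add {N i : ℕ} (r : ℕ) (hi : i < N) : alpha (2 ^ N + r) i = alpha r i := by
  have hbit : ∀ j < N, bit (2 ^ N + r) j = bit r j := fun j hj ↦ by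
    rw [bit, bit, Nat.testBit_two_pow_add_gt hj]
  rw [alpha, alpha, hbit i hi,
    sum_congr rfl fun j hj ↦ by rw [hbit j ((mem_range.1 hj).trans hi)]]

lemma abs_walsh_mul_Dir_of_shell {x : G} {i : ℕ} (h0 : x ∈ Iset i) (h1 : x i = 1)
    (k : ℕ) : |walsh k x * Dir k x| = alpha k i := by
  rw [Dir_eq_walsh_mul_of_shell h0 h1, ← mul_assoc, walsh_mul_self, one_mul, alpha_eq_abs]

lemma abs_Dir_of_shell {x : G} {i : ℕ} (h0 : x ∈ Iset i) (h1 : x i = 1) (k : ℕ) :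
    |Dir k x| = alpha k i := by
  rw [Dir_eq_walsh_mul_of_shell h0 h1, abs_mul, abs_walsh, one_mul, alpha_eq_abs]

lemma tdig_le_one (t : ℝ) (j : ℕ) : tdig t j ≤ 1 := by
  rw [tdig]
  omega

lemma abs_one_sub_two_mul_tdig (t : ℝ) (j : ℕ) : |1 - 2 * (tdig t j : ℝ)| = 1 := by
  rcases Nat.le_one_iff_eq_zero_or_eq_one.1 (tdig_le_one t j) with h | h <;> norm_num [h]

lemma mOf_lt (t : ℝ) (N : ℕ) : mOf t N < 2 ^ N := by
  induction N with
  | zero => simp [mOf]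
  | succ N ih =>
    rw [mOf, sum_range_succ, ← mOf, pow_succ]
    have := Nat.mul_le_mul_right (2 ^ N) (tdig_le_one t (N + 1))
    omega

lemma Dconj_two_pow_add (t : ℝ) {N n' : ℕ} (hn' : n' ≤ 2 ^ N) (x : G) :
    Dconj t N (2 ^ N + n') x = (Dir (2 ^ N) x - 2 * walsh (mOf t N) x * Dir (mOf t N) x)
      + (-1) ^ (x N).val * ((1 - 2 * (tdig t (N + 1) : ℝ)) * Dir n' x) := by
  rw [Dconj, Dir_two_pow_add hn', walsh_two_pow]
  ring

theorem Leb_formula_general (t : ℝ) (N n n' : ℕ)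
    (hn' : n = 2^N + n') (hn'lt : n' < 2^N) :
    Leb t N n =
      (∑ i ∈ Finset.range N, max (alpha n i : ℝ) (2 * (alpha (mOf t N) i : ℝ)) / 2^(i+1))
      + |2^(N+1) - (n:ℝ) - 2*(mOf t N : ℝ) + 2*(tdig t (N+1) : ℝ)*((n:ℝ) - 2^N)| / 2^(N+1)
      + |(n:ℝ) - 2*(mOf t N : ℝ) - 2*(tdig t (N+1) : ℝ)*((n:ℝ) - 2^N)| / 2^(N+1) := by
  set m := mOf t N
  set ε : ℝ := (tdig t (N + 1) : ℝ)
  have hm : m < 2 ^ N := mOf_lt t N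
  have hε : |1 - 2 * ε| = 1 := abs_one_sub_two_mul_tdig t (N + 1)
  set A : G → ℝ := fun x ↦ Dir (2 ^ N) x - 2 * walsh m x * Dir m x
  set B : G → ℝ := fun x ↦ (1 - 2 * ε) * Dir n' x
  have hA : DependsOn A (Set.Iio N) := fun x y h ↦ by
    simp only [A, Dir_dependsOn le_rfl h, walsh_dependsOn hm h, Dir_dependsOn hm.le h]
  have hB : DependsOn B (Set.Iio N) := fun x y h ↦ by simp only [B, Dir_dependsOn hn'lt.le h]
  have hshell : ∀ i < N, ∀ x ∈ Iset i, x i = 1 →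
      max |A x| |B x| = max (alpha n i : ℝ) (2 * alpha m i) := fun i hi x h0 h1 ↦ by
    simp only [A, B, Dir_two_pow_of_eq_one hi h1, zero_sub, abs_neg, mul_assoc, abs_mul,
      abs_walsh_mul_Dir_of_shell h0 h1, abs_Dir_of_shell h0 h1, hε, hn',
      alpha_two_pow_add n' hi, abs_two, one_mul]
    exact max_comm _ _
  have hn'R : (n : ℝ) = 2 ^ N + n' := by simp [hn']
  have hDconj : Dconj t N n = fun x ↦ A x + (-1) ^ (x N).val * B x :=
    funext fun x ↦ hn' ▸ Dconj_two_pow_add t hn'lt.le x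
  rw [Leb, hDconj, integral_abs_add_neg_one_pow_mul hA hB,
    sum_div_two_pow_eq_of_shells _ _ hshell]
  simp only [A, B, Dir_apply_zero, walsh_apply_zero, mul_one, Nat.cast_pow, Nat.cast_ofNat]
  rw [max_abs_abs_eq, hn'R]
  ring_nf

/-- Exact formula for the Lebesgue constant of the conjugate transform. -/
theorem Leb_formula (t : ℝ) (ht : t ∈ Set.Ico (0:ℝ) 1) (N n n' : ℕ)
    (h1 : 2^N ≤ n) (h2 : n < 2^(N+1)) (hn' : n = 2^N + n') (hn'lt : n' < 2^N) :
    Leb t N n =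
      (∑ i ∈ Finset.range N, max (alpha n i : ℝ) (2 * (alpha (mOf t N) i : ℝ)) / 2^(i+1))
      + |2^(N+1) - (n:ℝ) - 2*(mOf t N : ℝ) + 2*(tdig t (N+1) : ℝ)*((n:ℝ) - 2^N)| / 2^(N+1)
      + |(n:ℝ) - 2*(mOf t N : ℝ) - 2*(tdig t (N+1) : ℝ)*((n:ℝ) - 2^N)| / 2^(N+1) :=
  Leb_formula_general t N n n' hn' hn'lt
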